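/- Let X₁ ⊆ X and Y₁ ⊆ Y have the extension property in topological spaces X and Y respectively, e : X₁ → Y₁ a homeomorphism, E = {(x, e(x)) : x ∈ X₁}, and g : E → ℝ a function of the first Baire class. If E is functionally closed in X × Y, then there exists a separately continuous function f : X × Y → ℝ with f restricted to E equal to g. -/

import Mathlib

/-!
Transport `g` into `(-1, 1)` by an order isomorphism `θ : ℝ ≃o (-1, 1)`. The extension property
then turns `θ ∘ gₙ`, read along the graph `E` of `e`, into continuous `vₙ` on `X` and `wₙ` on `Y`
with `vₙ x = wₙ y` on `E` and `vₙ x → θ (g (x, y))` there. Glue them as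
`F = lim_M (v₀ + ∑_{1 ≤ n ≤ M} μₙ (vₙ - vₙ₋₁))` (`sepExt`), with continuous weights `μₙ`
(`cutoff`) that equal `1` on `E = φ⁻¹ {0}` and vanish once `n ≥ 2 / |φ|`. Off `E` the sum is
locally finite, so `F` is continuous there; on `E` it telescopes to `lim vₙ = θ ∘ g`. Near
`(x₀, y₀) ∈ E`, `F (x, y)` is an average of values `vₙ x` with `n` large and
`n |vₙ x - wₙ y| < 2`; on the fibre `x = x₀` these are close to `lim vₙ x₀`, on the fibre
`y = y₀` they are close to `wₙ y₀ = vₙ x₀`. So `F` is separately continuous; clamping it into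
`(-1, 1)` away from `E` and applying `θ⁻¹` gives `f`.
-/

open Set Filter Topology

/-- Abel summation of `z 0 + ∑_{n < M} a (n + 1) * (z (n + 1) - z n)` (see `abelMean_succ`). When
`a` decreases from `a 0 = 1` and stays nonnegative, it is a convex combination of `z 0, …, z M`
in which `z n` has weight `a n - a (n + 1)` for `n < M` and `a M` for `n = M`. -/
def abelMean (a z : ℕ → ℝ) (M : ℕ) : ℝ :=
  ∑ n ∈ Finset.range M, (a n - a (n + 1)) * z n + a M * z M

section AbelMean

variable {a z : ℕ → ℝ}

theorem abelMean_succ (M : ℕ) :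
    abelMean a z (M + 1) = abelMean a z M + a (M + 1) * (z (M + 1) - z M) := by
  simp only [abelMean, Finset.sum_range_succ]
  ring

theorem abelMean_neg (M : ℕ) : abelMean a (fun n => -z n) M = -abelMean a z M := by
  simp only [abelMean, mul_neg, Finset.sum_neg_distrib]
  ring

theorem abelMean_eq_of_forall_le_eq_one {M : ℕ} (h : ∀ n ≤ M, a n = 1) :
    abelMean a z M = z M := by
  rw [abelMean, h M le_rfl, one_mul, add_eq_right]
  refine Finset.sum_eq_zero fun n hn => ?_
  have hn := Finset.mem_range.1 hn
  rw [h n hn.le, h (n + 1) hn, sub_self, zero_mul]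

theorem abelMean_eq_of_forall_lt_eq_zero {M M' : ℕ} (h : ∀ n, M < n → a n = 0) (hM : M ≤ M') :
    abelMean a z M' = abelMean a z M := by
  induction M', hM using Nat.le_induction with
  | base => rfl
  | succ M' hM ih => rw [abelMean_succ, h (M' + 1) (by omega), ih, zero_mul, add_zero]

section Bounds

variable {N M : ℕ} (ha : Antitone a) (ha₀ : ∀ n, 0 ≤ a n) (ha₁ : ∀ n, a n ≤ 1) (hN : a N = 1)
  (hM : N ≤ M)
include ha ha₀ ha₁ hN hM

theorem le_abelMean {lo : ℝ} (hz : ∀ n, N ≤ n → 0 < a n → lo ≤ z n) : lo ≤ abelMean a z M := by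
  have hsum : ∑ n ∈ Finset.range M, (a n - a (n + 1)) + a M = 1 := by
    rw [Finset.sum_range_sub']
    linarith [ha₁ 0, ha (Nat.zero_le N)]
  have hterm : ∀ n, N ≤ n → ∀ t, 0 ≤ t → t ≤ a n → 0 ≤ t * (z n - lo) := by
    intro n hn t ht₀ ht
    rcases (ha₀ n).eq_or_lt with h | h
    · rw [le_antisymm (h ▸ ht) ht₀, zero_mul]
    · exact mul_nonneg ht₀ (sub_nonneg.2 (hz n hn h))
  have hweight : ∀ n ∈ Finset.range M, 0 ≤ (a n - a (n + 1)) * (z n - lo) := by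
    intro n _
    by_cases hn : N ≤ n
    · exact hterm n hn _ (sub_nonneg.2 (ha n.le_succ)) (by linarith [ha₀ (n + 1)])
    · have h₁ : a (n + 1) = 1 := le_antisymm (ha₁ _) (hN ▸ ha (by omega))
      have h₀ : a n = 1 := le_antisymm (ha₁ _) (hN ▸ ha (by omega))
      rw [h₀, h₁, sub_self, zero_mul]
  have hdiff : abelMean a z M - lo
      = ∑ n ∈ Finset.range M, (a n - a (n + 1)) * (z n - lo) + a M * (z M - lo) := by
    have hlo : ∑ n ∈ Finset.range M, (a n - a (n + 1)) * (z n - lo)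
        = ∑ n ∈ Finset.range M, (a n - a (n + 1)) * z n
          - (∑ n ∈ Finset.range M, (a n - a (n + 1))) * lo := by
      rw [Finset.sum_mul, ← Finset.sum_sub_distrib]
      simp only [mul_sub]
    rw [abelMean, hlo]
    linear_combination lo * hsum
  linarith [Finset.sum_nonneg hweight, hterm M hM (a M) (ha₀ M) le_rfl]

theorem abelMean_mem_Icc {lo hi : ℝ} (hz : ∀ n, N ≤ n → 0 < a n → z n ∈ Icc lo hi) :
    abelMean a z M ∈ Icc lo hi := by
  refine ⟨le_abelMean ha ha₀ ha₁ hN hM fun n hn h => (hz n hn h).1, ?_⟩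
  have := le_abelMean (z := fun n => -z n) ha ha₀ ha₁ hN hM fun n hn h => neg_le_neg (hz n hn h).2
  rw [abelMean_neg] at this
  exact le_of_neg_le_neg this

end Bounds

end AbelMean

section SeparateContinuity

variable {X Y Z W : Type*} [TopologicalSpace X] [TopologicalSpace Y] [TopologicalSpace Z]
  [TopologicalSpace W]

def SeparatelyContinuous (f : X × Y → Z) : Prop :=
  (∀ x, Continuous fun y => f (x, y)) ∧ ∀ y, Continuous fun x => f (x, y)

theorem SeparatelyContinuous.comp {f : X × Y → Z} {g : Z → W} (hf : SeparatelyContinuous f)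
    (hg : Continuous g) : SeparatelyContinuous (g ∘ f) :=
  ⟨fun x => hg.comp (hf.1 x), fun y => hg.comp (hf.2 y)⟩

/-- Clamping `F` to `[κ - 1, 1 - κ]`, where `κ = |φ| / (1 + |φ|)` vanishes exactly on the zero set
of `φ`, pushes `F` into `(-1, 1)` without changing it there. -/
theorem SeparatelyContinuous.exists_mem_Ioo_eq {F φ : X × Y → ℝ} (hF : SeparatelyContinuous F)
    (hφ : Continuous φ) (hFφ : ∀ p, φ p = 0 → F p ∈ Ioo (-1) 1) :
    ∃ G : X × Y → Ioo (-1 : ℝ) 1, SeparatelyContinuous G ∧ ∀ p, φ p = 0 → (G p : ℝ) = F p := by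
  set κ : X × Y → ℝ := fun p => |φ p| / (1 + |φ p|)
  have hκ : Continuous κ := hφ.abs.div (continuous_const.add hφ.abs) fun p => by positivity
  have hκ₁ : ∀ p, κ p < 1 := fun p => (div_lt_one (by positivity)).2 (lt_one_add _)
  set H : X × Y → ℝ := fun p => max (κ p - 1) (min (F p) (1 - κ p))
  have hHφ : ∀ p, φ p = 0 → H p = F p := by
    intro p hp
    simp only [H, κ, hp, abs_zero, zero_div, zero_sub, sub_zero]
    rw [min_eq_left (hFφ p hp).2.le, max_eq_right (hFφ p hp).1.le]
  have hH : ∀ p, H p ∈ Ioo (-1) 1 := by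
    intro p
    by_cases hp : φ p = 0
    · exact hHφ p hp ▸ hFφ p hp
    · have hκ₀ : 0 < κ p := div_pos (abs_pos.2 hp) (by positivity)
      exact ⟨by linarith [le_max_left (κ p - 1) (min (F p) (1 - κ p))],
        max_lt (by linarith [hκ₁ p]) ((min_le_right _ _).trans_lt (by linarith))⟩
  refine ⟨fun p => ⟨H p, hH p⟩, ⟨fun x => ?_, fun y => ?_⟩, hHφ⟩
  · have := hκ.comp (Continuous.prodMk_right x)
    exact Continuous.subtype_mk ((this.sub continuous_const).max
      ((hF.1 x).min (continuous_const.sub this))) _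
  · have := hκ.comp (Continuous.prodMk_left y)
    exact Continuous.subtype_mk ((this.sub continuous_const).max
      ((hF.2 y).min (continuous_const.sub this))) _

end SeparateContinuity

section Construction

variable {X Y : Type*} (φ : X × Y → ℝ) (v : ℕ → X → ℝ) (w : ℕ → Y → ℝ)

def mismatch (n : ℕ) (p : X × Y) : ℝ :=
  ∑ k ∈ Finset.range (n + 1), |v k p.1 - w k p.2|

def cutoff (n : ℕ) (p : X × Y) : ℝ :=
  max 0 (min 1 (2 - n * (|φ p| + mismatch v w n p)))

def partialExt (M : ℕ) (p : X × Y) : ℝ :=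
  abelMean (fun n => cutoff φ v w n p) (fun n => v n p.1) M

noncomputable def sepExt (p : X × Y) : ℝ :=
  limUnder atTop fun M => partialExt φ v w M p

theorem mismatch_nonneg (n : ℕ) (p : X × Y) : 0 ≤ mismatch v w n p :=
  Finset.sum_nonneg fun _ _ => abs_nonneg _

theorem monotone_mismatch (p : X × Y) : Monotone fun n => mismatch v w n p := fun _ _ h =>
  Finset.sum_le_sum_of_subset_of_nonneg (Finset.range_subset_range.2 (by omega))
    fun _ _ _ => abs_nonneg _

theorem abs_sub_le_mismatch (n : ℕ) (p : X × Y) : |v n p.1 - w n p.2| ≤ mismatch v w n p :=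
  Finset.single_le_sum (f := fun k => |v k p.1 - w k p.2|) (fun _ _ => abs_nonneg _)
    (Finset.self_mem_range_succ n)

theorem mismatch_eq_zero {p : X × Y} (h : ∀ k, v k p.1 = w k p.2) (n : ℕ) :
    mismatch v w n p = 0 :=
  Finset.sum_eq_zero fun k _ => by rw [h k, sub_self, abs_zero]

theorem cutoff_nonneg (n : ℕ) (p : X × Y) : 0 ≤ cutoff φ v w n p := le_max_left _ _

theorem cutoff_le_one (n : ℕ) (p : X × Y) : cutoff φ v w n p ≤ 1 :=
  max_le zero_le_one (min_le_left _ _)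

theorem antitone_cutoff (p : X × Y) : Antitone fun n => cutoff φ v w n p := by
  intro m n h
  refine max_le_max le_rfl (min_le_min le_rfl (sub_le_sub_left ?_ _))
  exact mul_le_mul (Nat.cast_le.2 h) (add_le_add le_rfl (monotone_mismatch v w p h))
    (add_nonneg (abs_nonneg _) (mismatch_nonneg v w m p)) (Nat.cast_nonneg n)

variable {φ v w}

theorem cutoff_eq_one {n : ℕ} {p : X × Y} (h : n * (|φ p| + mismatch v w n p) ≤ 1) :
    cutoff φ v w n p = 1 := by
  rw [cutoff, min_eq_left (by linarith), max_eq_right zero_le_one]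

theorem cutoff_eq_zero {n : ℕ} {p : X × Y} (h : 2 ≤ n * |φ p|) : cutoff φ v w n p = 0 := by
  have : (n : ℝ) * |φ p| ≤ n * (|φ p| + mismatch v w n p) :=
    mul_le_mul_of_nonneg_left (le_add_of_nonneg_right (mismatch_nonneg v w n p)) n.cast_nonneg
  exact max_eq_left ((min_le_right _ _).trans (by linarith))

theorem mul_abs_sub_lt_of_cutoff_pos {n : ℕ} {p : X × Y} (h : 0 < cutoff φ v w n p) :
    n * |v n p.1 - w n p.2| < 2 := by
  by_contra! hc
  have : (n : ℝ) * |v n p.1 - w n p.2| ≤ n * (|φ p| + mismatch v w n p) :=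
    mul_le_mul_of_nonneg_left (by linarith [abs_nonneg (φ p), abs_sub_le_mismatch v w n p])
      n.cast_nonneg
  exact h.not_ge (max_le le_rfl ((min_le_right _ _).trans (by linarith)))

theorem sepExt_eq_partialExt {M : ℕ} {p : X × Y} (h : ∀ n, M < n → cutoff φ v w n p = 0) :
    sepExt φ v w p = partialExt φ v w M p :=
  (tendsto_atTop_of_eventually_const fun _ hM' =>
    abelMean_eq_of_forall_lt_eq_zero h hM').limUnder_eq

theorem cutoff_eq_zero_of_lt {c : ℝ} {n : ℕ} {p : X × Y} (hc : 0 < c) (hp : c ≤ |φ p|)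
    (hn : ⌈2 / c⌉₊ < n) : cutoff φ v w n p = 0 := by
  refine cutoff_eq_zero ?_
  calc (2 : ℝ) = 2 / c * c := (div_mul_cancel₀ 2 hc.ne').symm
    _ ≤ n * |φ p| := mul_le_mul ((Nat.le_ceil _).trans (Nat.cast_le.2 hn.le)) hp hc.le
        n.cast_nonneg

section ZeroSet

variable (hvw : ∀ p, φ p = 0 → ∀ n, v n p.1 = w n p.2)
  (hconv : ∀ p, φ p = 0 → ∃ l, Tendsto (fun n => v n p.1) atTop (𝓝 l))
include hvw

theorem cutoff_eq_one_of_eq_zero {p : X × Y} (hp : φ p = 0) (n : ℕ) : cutoff φ v w n p = 1 :=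
  cutoff_eq_one (by rw [hp, mismatch_eq_zero v w (hvw p hp)]; simp)

theorem partialExt_eq_of_eq_zero {p : X × Y} (hp : φ p = 0) (M : ℕ) :
    partialExt φ v w M p = v M p.1 :=
  abelMean_eq_of_forall_le_eq_one fun n _ => cutoff_eq_one_of_eq_zero hvw hp n

include hconv

theorem tendsto_partialExt (p : X × Y) :
    Tendsto (fun M => partialExt φ v w M p) atTop (𝓝 (sepExt φ v w p)) := by
  refine tendsto_nhds_limUnder ?_
  by_cases hp : φ p = 0
  · obtain ⟨l, hl⟩ := hconv p hp
    exact ⟨l, by simpa only [partialExt_eq_of_eq_zero hvw hp] using hl⟩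
  · exact ⟨_, tendsto_atTop_of_eventually_const fun _ hM => abelMean_eq_of_forall_lt_eq_zero
      (fun n hn => cutoff_eq_zero_of_lt (abs_pos.2 hp) le_rfl hn) hM⟩

theorem tendsto_sepExt_of_eq_zero {p : X × Y} (hp : φ p = 0) :
    Tendsto (fun n => v n p.1) atTop (𝓝 (sepExt φ v w p)) := by
  simpa only [partialExt_eq_of_eq_zero hvw hp] using tendsto_partialExt hvw hconv p

theorem sepExt_mem_Icc {N : ℕ} {p : X × Y} {lo hi : ℝ} (hN : cutoff φ v w N p = 1)
    (hz : ∀ n, N ≤ n → 0 < cutoff φ v w n p → v n p.1 ∈ Icc lo hi) :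
    sepExt φ v w p ∈ Icc lo hi :=
  isClosed_Icc.mem_of_tendsto (tendsto_partialExt hvw hconv p) <| eventually_atTop.2
    ⟨N, fun _ hM => abelMean_mem_Icc (antitone_cutoff φ v w p) (cutoff_nonneg φ v w · p)
      (cutoff_le_one φ v w · p) hN hM hz⟩

end ZeroSet

section Topology

variable [TopologicalSpace X] [TopologicalSpace Y]
  (hφ : Continuous φ) (hv : ∀ n, Continuous (v n)) (hw : ∀ n, Continuous (w n))
include hv hw

theorem continuous_mismatch (n : ℕ) : Continuous (mismatch v w n) :=
  continuous_finsetSum _ fun k _ =>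
    (((hv k).comp continuous_fst).sub ((hw k).comp continuous_snd)).abs

include hφ

theorem continuous_cutoff (n : ℕ) : Continuous (cutoff φ v w n) :=
  continuous_const.max (continuous_const.min (continuous_const.sub
    (continuous_const.mul (hφ.abs.add (continuous_mismatch hv hw n)))))

theorem continuous_partialExt (M : ℕ) : Continuous (partialExt φ v w M) :=
  (continuous_finsetSum _ fun n _ =>
    ((continuous_cutoff hφ hv hw n).sub (continuous_cutoff hφ hv hw (n + 1))).mul
      ((hv n).comp continuous_fst)).add
    ((continuous_cutoff hφ hv hw M).mul ((hv M).comp continuous_fst))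

theorem continuousAt_sepExt_of_ne_zero {p₀ : X × Y} (hp₀ : φ p₀ ≠ 0) :
    ContinuousAt (sepExt φ v w) p₀ := by
  have hc : 0 < |φ p₀| / 2 := by positivity
  have hnear : ∀ᶠ p in 𝓝 p₀, |φ p₀| / 2 ≤ |φ p| :=
    (hφ.abs.tendsto p₀).eventually_const_le (half_lt_self (abs_pos.2 hp₀))
  refine (continuous_partialExt hφ hv hw ⌈2 / (|φ p₀| / 2)⌉₊).continuousAt.congr ?_
  filter_upwards [hnear] with p hp
  exact (sepExt_eq_partialExt fun n hn => cutoff_eq_zero_of_lt hc hp hn).symm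

variable (hvw : ∀ p, φ p = 0 → ∀ n, v n p.1 = w n p.2)
  (hconv : ∀ p, φ p = 0 → ∃ l, Tendsto (fun n => v n p.1) atTop (𝓝 l))
include hvw

theorem eventually_cutoff_eq_one {p₀ : X × Y} (hp₀ : φ p₀ = 0) (N : ℕ) :
    ∀ᶠ p in 𝓝 p₀, cutoff φ v w N p = 1 := by
  have hcont : Continuous fun p => (N : ℝ) * (|φ p| + mismatch v w N p) :=
    continuous_const.mul (hφ.abs.add (continuous_mismatch hv hw N))
  have h₀ : (N : ℝ) * (|φ p₀| + mismatch v w N p₀) < 1 := by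
    rw [hp₀, mismatch_eq_zero v w (hvw p₀ hp₀)]
    simp
  filter_upwards [hcont.continuousAt.eventually_lt continuousAt_const h₀] with p hp
  exact cutoff_eq_one hp.le

include hconv

theorem continuousAt_sepExt_right {x₀ : X} {y₀ : Y} (h₀ : φ (x₀, y₀) = 0) :
    ContinuousAt (fun y => sepExt φ v w (x₀, y)) y₀ := by
  rw [ContinuousAt, (nhds_basis_Icc_pos _).tendsto_right_iff]
  intro ε hε
  obtain ⟨N, hN⟩ := eventually_atTop.1 <|
    (nhds_basis_Icc_pos _).tendsto_right_iff.1 (tendsto_sepExt_of_eq_zero hvw hconv h₀) ε hε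
  filter_upwards [((Continuous.prodMk_right x₀).tendsto y₀).eventually
    (eventually_cutoff_eq_one hφ hv hw hvw h₀ N)] with y hy
  exact sepExt_mem_Icc hvw hconv hy fun n hn _ => hN n hn

theorem continuousAt_sepExt_left {x₀ : X} {y₀ : Y} (h₀ : φ (x₀, y₀) = 0) :
    ContinuousAt (fun x => sepExt φ v w (x, y₀)) x₀ := by
  rw [ContinuousAt, (nhds_basis_Icc_pos _).tendsto_right_iff]
  intro ε hε
  set L := sepExt φ v w (x₀, y₀)
  have hwL : Tendsto (fun n => w n y₀) atTop (𝓝 L) := by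
    simpa only [hvw _ h₀] using tendsto_sepExt_of_eq_zero hvw hconv h₀
  have hlarge : ∀ᶠ n : ℕ in atTop, 4 ≤ (n : ℝ) * ε :=
    (tendsto_natCast_atTop_atTop.atTop_mul_const hε).eventually_ge_atTop 4
  obtain ⟨N, hN⟩ := eventually_atTop.1 <|
    ((nhds_basis_Icc_pos _).tendsto_right_iff.1 hwL (ε / 2) (half_pos hε)).and hlarge
  filter_upwards [((Continuous.prodMk_left y₀).tendsto x₀).eventually
    (eventually_cutoff_eq_one hφ hv hw hvw h₀ N)] with x hx
  refine sepExt_mem_Icc hvw hconv hx fun n hn hpos => ?_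
  obtain ⟨⟨hlo, hhi⟩, hnε⟩ := hN n hn
  have hclose : |v n x - w n y₀| < ε / 2 := by
    nlinarith [mul_abs_sub_lt_of_cutoff_pos hpos, abs_nonneg (v n x - w n y₀)]
  obtain ⟨h₁, h₂⟩ := abs_sub_lt_iff.1 hclose
  constructor <;> linarith

theorem separatelyContinuous_sepExt : SeparatelyContinuous (sepExt φ v w) := by
  refine ⟨fun x₀ => continuous_iff_continuousAt.2 fun y₀ => ?_,
    fun y₀ => continuous_iff_continuousAt.2 fun x₀ => ?_⟩
  · by_cases h₀ : φ (x₀, y₀) = 0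
    · exact continuousAt_sepExt_right hφ hv hw hvw hconv h₀
    · exact (continuousAt_sepExt_of_ne_zero hφ hv hw h₀).comp
        (Continuous.prodMk_right x₀).continuousAt
  · by_cases h₀ : φ (x₀, y₀) = 0
    · exact continuousAt_sepExt_left hφ hv hw hvw hconv h₀
    · exact (continuousAt_sepExt_of_ne_zero hφ hv hw h₀).comp (f := fun x => (x, y₀))
        (Continuous.prodMk_left y₀).continuousAt

end Topology

end Construction

section Extension

variable {X Y : Type*} [TopologicalSpace X] [TopologicalSpace Y]

def HasExtensionProperty (A : Set X) : Prop :=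
  ∀ u : A → ℝ, Continuous u → (∀ a, u a ∈ Icc (0 : ℝ) 1) →
    ∃ v : X → ℝ, Continuous v ∧ (∀ x, v x ∈ Icc (0 : ℝ) 1) ∧ ∀ a : A, v a = u a

theorem HasExtensionProperty.exists_extension {A : Set X} (hA : HasExtensionProperty A)
    {u : A → ℝ} (hu : Continuous u) (hu₁ : ∀ a, u a ∈ Icc (-1) 1) :
    ∃ v : X → ℝ, Continuous v ∧ ∀ a : A, v a = u a := by
  obtain ⟨v, hv, -, hvu⟩ := hA (fun a => (u a + 1) / 2) (by fun_prop)
    fun a => ⟨by linarith [(hu₁ a).1], by linarith [(hu₁ a).2]⟩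
  exact ⟨fun x => 2 * v x - 1, by fun_prop, fun a => by simp only [hvu]; ring⟩

theorem HasExtensionProperty.exists_extensions_of_graph {X₁ : Set X} {Y₁ : Set Y}
    (hX₁ : HasExtensionProperty X₁) (hY₁ : HasExtensionProperty Y₁) (e : X₁ ≃ₜ Y₁)
    {E : Set (X × Y)} (hE : E = {p : X × Y | ∃ x : X₁, p = ((x : X), (e x : Y))})
    {u : E → ℝ} (hu : Continuous u) (hu₁ : ∀ p, u p ∈ Icc (-1) 1) :
    ∃ v : X → ℝ, ∃ w : Y → ℝ, Continuous v ∧ Continuous w ∧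
      ∀ p : E, v (p : X × Y).1 = u p ∧ w (p : X × Y).2 = u p := by
  subst hE
  let γ : X₁ → {p : X × Y | ∃ x : X₁, p = ((x : X), (e x : Y))} := fun a => ⟨(a, e a), a, rfl⟩
  have hγ : Continuous γ :=
    (continuous_subtype_val.prodMk (continuous_subtype_val.comp e.continuous)).subtype_mk _
  obtain ⟨v, hv, hvu⟩ := hX₁.exists_extension (hu.comp hγ) fun _ => hu₁ _
  obtain ⟨w, hw, hwu⟩ := hY₁.exists_extension (hu.comp (hγ.comp e.symm.continuous)) fun _ => hu₁ _
  refine ⟨v, w, hv, hw, ?_⟩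
  rintro ⟨_, a, rfl⟩
  exact ⟨hvu a, by simp [hwu, γ]⟩

end Extension

theorem stmt6 {X Y : Type*} [TopologicalSpace X] [TopologicalSpace Y]
    (X₁ : Set X) (Y₁ : Set Y)
    (hX₁ : ∀ u : X₁ → ℝ, Continuous u → (∀ a, u a ∈ Icc (0:ℝ) 1) →
      ∃ v : X → ℝ, Continuous v ∧ (∀ x, v x ∈ Icc (0:ℝ) 1) ∧ ∀ a : X₁, v a = u a)
    (hY₁ : ∀ u : Y₁ → ℝ, Continuous u → (∀ b, u b ∈ Icc (0:ℝ) 1) →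
      ∃ v : Y → ℝ, Continuous v ∧ (∀ y, v y ∈ Icc (0:ℝ) 1) ∧ ∀ b : Y₁, v b = u b)
    (e : X₁ ≃ₜ Y₁)
    (E : Set (X × Y)) (hE : E = {p : X × Y | ∃ x : X₁, p = ((x : X), (e x : Y))})
    (g : E → ℝ)
    (hg : ∃ gs : ℕ → E → ℝ, (∀ n, Continuous (gs n)) ∧
      ∀ p : E, Tendsto (fun n => gs n p) atTop (𝓝 (g p)))
    (hEfc : ∃ φ : X × Y → ℝ, Continuous φ ∧ E = φ ⁻¹' {0}) :
    ∃ f : X × Y → ℝ,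
      (∀ x : X, Continuous fun y => f (x, y)) ∧
      (∀ y : Y, Continuous fun x => f (x, y)) ∧
      (∀ p : E, f p = g p) := by
  obtain ⟨gs, hgs, hlim⟩ := hg
  obtain ⟨φ, hφ, rfl⟩ := hEfc
  set θ := orderIsoIooNegOneOne ℝ
  choose v w hv hw hvwE using fun n =>
    HasExtensionProperty.exists_extensions_of_graph hX₁ hY₁ e hE (u := fun p => (θ (gs n p) : ℝ))
      (continuous_subtype_val.comp (θ.continuous.comp (hgs n))) fun _ => Ioo_subset_Icc_self (θ _).2
  have hvw : ∀ p, φ p = 0 → ∀ n, v n p.1 = w n p.2 := fun p hp n =>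
    (hvwE n ⟨p, hp⟩).1.trans (hvwE n ⟨p, hp⟩).2.symm
  have hvg : ∀ p : φ ⁻¹' {0}, Tendsto (fun n => v n p.1.1) atTop (𝓝 (θ (g p) : ℝ)) := fun p =>
    (((continuous_subtype_val.comp θ.continuous).tendsto _).comp (hlim p)).congr
      fun n => (hvwE n p).1.symm
  have hconv : ∀ p, φ p = 0 → ∃ l, Tendsto (fun n => v n p.1) atTop (𝓝 l) :=
    fun p hp => ⟨_, hvg ⟨p, hp⟩⟩
  have hFg : ∀ p : φ ⁻¹' {0}, sepExt φ v w p = θ (g p) := fun p =>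
    tendsto_nhds_unique (tendsto_sepExt_of_eq_zero hvw hconv p.2) (hvg p)
  obtain ⟨G, hG, hGF⟩ := (separatelyContinuous_sepExt hφ hv hw hvw hconv).exists_mem_Ioo_eq hφ
    fun p hp => hFg ⟨p, hp⟩ ▸ (θ _).2
  obtain ⟨hG₁, hG₂⟩ := hG.comp θ.symm.continuous
  refine ⟨_, hG₁, hG₂, fun p => ?_⟩
  rw [Function.comp_apply, show G p = θ (g p) from Subtype.ext ((hGF p p.2).trans (hFg p)),
    OrderIso.symm_apply_apply]
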